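/- Let ξ1 = R(z) → ∃z1,z2,z3 K3(z1,z2,z3) and, for a finite graph G with vertices x1,...,xn, let ξ2 = E(x,y) → ∃x1,...,xn G(x1,...,xn), where K3(z1,z2,z3) abbreviates the six E-atoms of the complete graph on z1,z2,z3 and G(x1,...,xn) abbreviates the conjunction of atoms E(xi,xj) for each edge of G. Then ξ1 ≺ ξ2 if and only if G is not 3-colorable. -/

import Mathlib

/-! Common framework: instances, homomorphisms, tgds, chase variants. -/

inductive Val where
  | c : ℕ → Val
  | n : ℕ → Val
deriving DecidableEq

structure Atom (Rel : Type) where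
  rel : Rel
  args : List Val

abbrev Inst (Rel : Type) := Set (Atom Rel)

def mapAtom {Rel : Type} (h : Val → Val) (a : Atom Rel) : Atom Rel :=
  ⟨a.rel, a.args.map h⟩

/-- Homomorphisms fix constants. -/
def ConstFix (h : Val → Val) : Prop := ∀ k, h (Val.c k) = Val.c k

def IsHom {Rel : Type} (h : Val → Val) (I J : Inst Rel) : Prop :=
  ConstFix h ∧ ∀ a ∈ I, mapAtom h a ∈ J

def domI {Rel : Type} (I : Inst Rel) : Set Val :=
  {v | ∃ a ∈ I, v ∈ a.args}

/-- Terms in dependencies: `inl v` is variable `v`, `inr k` is constant `k`. -/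
abbrev Tm := ℕ ⊕ ℕ

structure TAtom (Rel : Type) where
  rel : Rel
  args : List Tm

def TAtom.vars {Rel : Type} (a : TAtom Rel) : Set ℕ := {v | Sum.inl v ∈ a.args}

def varsOf {Rel : Type} (S : Set (TAtom Rel)) : Set ℕ := ⋃ a ∈ S, a.vars

/-- A tuple-generating dependency: body → ∃ z̄ head; the existential
variables are exactly the head variables not occurring in the body. -/
structure TGD (Rel : Type) where
  body : Set (TAtom Rel)
  head : Set (TAtom Rel)

def applyT (g : ℕ → Val) : Tm → Val
  | Sum.inl v => g v
  | Sum.inr k => Val.c k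

def applyA {Rel : Type} (g : ℕ → Val) (a : TAtom Rel) : Atom Rel :=
  ⟨a.rel, a.args.map (applyT g)⟩

def instT {Rel : Type} (g : ℕ → Val) (S : Set (TAtom Rel)) : Inst Rel :=
  (applyA g) '' S

def frontierV {Rel : Type} (ξ : TGD Rel) : Set ℕ := varsOf ξ.body ∩ varsOf ξ.head

def evars {Rel : Type} (ξ : TGD Rel) : Set ℕ := varsOf ξ.head \ varsOf ξ.body

def EqOnBody {Rel : Type} (ξ : TGD Rel) (g g' : ℕ → Val) : Prop :=
  ∀ v ∈ varsOf ξ.body, g v = g' v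

def EqOnFrontier {Rel : Type} (ξ : TGD Rel) (g g' : ℕ → Val) : Prop :=
  ∀ v ∈ frontierV ξ, g v = g' v

/-- `(ξ, g)` is a trigger on `I`. -/
def IsTrigger {Rel : Type} (ξ : TGD Rel) (g : ℕ → Val) (I : Inst Rel) : Prop :=
  instT g ξ.body ⊆ I

/-- `(ξ, g)` is an active trigger on `I`. -/
def Active {Rel : Type} (ξ : TGD Rel) (g : ℕ → Val) (I : Inst Rel) : Prop :=
  IsTrigger ξ g I ∧ ¬ ∃ g', EqOnBody ξ g g' ∧ instT g' ξ.head ⊆ I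

/-- `I` satisfies the tgd `ξ`. -/
def Sat {Rel : Type} (I : Inst Rel) (ξ : TGD Rel) : Prop := ∀ g, ¬ Active ξ g I

/-- `g'` extends `g` by assigning distinct fresh nulls to the existential
variables of `ξ`. -/
def FreshExt {Rel : Type} (I : Inst Rel) (ξ : TGD Rel) (g g' : ℕ → Val) : Prop :=
  EqOnBody ξ g g' ∧
  (∀ v ∈ evars ξ, (∃ k, g' v = Val.n k) ∧ g' v ∉ domI I) ∧
  (∀ v ∈ evars ξ, ∀ w ∈ evars ξ, g' v = g' w → v = w)

def NoActive {Rel : Type} (D : Set (TGD Rel)) (I : Inst Rel) : Prop :=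
  ∀ ξ ∈ D, ∀ g, ¬ Active ξ g I

/-- A standard-chase step. -/
def StdStep {Rel : Type} (D : Set (TGD Rel)) (I J : Inst Rel) : Prop :=
  ∃ ξ ∈ D, ∃ g g', Active ξ g I ∧ FreshExt I ξ g g' ∧ J = I ∪ instT g' ξ.head

/-- A standard chase sequence (stuttering once no active trigger remains). -/
structure StdSeq {Rel : Type} (D : Set (TGD Rel)) (I : Inst Rel) where
  inst : ℕ → Inst Rel
  init : inst 0 = I
  step : ∀ i, StdStep D (inst i) (inst (i + 1)) ∨
    (NoActive D (inst i) ∧ inst (i + 1) = inst i)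

def StdSeq.Terminates {Rel : Type} {D : Set (TGD Rel)} {I : Inst Rel}
    (s : StdSeq D I) : Prop :=
  ∃ i, NoActive D (s.inst i)

/-- Fairness: every active trigger is eventually fired or deactivated. -/
def StdSeq.Fair {Rel : Type} {D : Set (TGD Rel)} {I : Inst Rel}
    (s : StdSeq D I) : Prop :=
  ∀ i, ∀ ξ ∈ D, ∀ g, Active ξ g (s.inst i) → ∃ j, i ≤ j ∧ ¬ Active ξ g (s.inst j)

/-- An oblivious chase sequence: fires triggers (active or not), each
equivalence class (identified by the body variables) at most once. -/
structure OblSeq {Rel : Type} (D : Set (TGD Rel)) (I : Inst Rel) where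
  inst : ℕ → Inst Rel
  fired : ℕ → Option (TGD Rel × (ℕ → Val))
  init : inst 0 = I
  step : ∀ i, (fired i).elim (inst (i + 1) = inst i)
    (fun p => p.1 ∈ D ∧ IsTrigger p.1 p.2 (inst i) ∧
      ∃ g', FreshExt (inst i) p.1 p.2 g' ∧ inst (i + 1) = inst i ∪ instT g' p.1.head)
  once : ∀ i j ξ g g', fired i = some (ξ, g) → fired j = some (ξ, g') →
    EqOnBody ξ g g' → i = j

def OblSeq.Fires {Rel : Type} {D : Set (TGD Rel)} {I : Inst Rel}
    (s : OblSeq D I) (ξ : TGD Rel) (g : ℕ → Val) : Prop :=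
  ∃ j g₀, s.fired j = some (ξ, g₀) ∧ EqOnBody ξ g₀ g

/-- The oblivious chase terminates: only finitely many firings occur. -/
def OblSeq.Terminates {Rel : Type} {D : Set (TGD Rel)} {I : Inst Rel}
    (s : OblSeq D I) : Prop :=
  ∃ i, ∀ j, i ≤ j → s.fired j = none

/-- Fairness: every applicable trigger is eventually fired. -/
def OblSeq.Fair {Rel : Type} {D : Set (TGD Rel)} {I : Inst Rel}
    (s : OblSeq D I) : Prop :=
  ∀ i, ∀ ξ ∈ D, ∀ g, IsTrigger ξ g (s.inst i) → s.Fires ξ g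

/-- A semi-oblivious chase sequence: like the oblivious one, but triggers are
identified when they agree on the frontierV variables. -/
structure SoblSeq {Rel : Type} (D : Set (TGD Rel)) (I : Inst Rel) where
  inst : ℕ → Inst Rel
  fired : ℕ → Option (TGD Rel × (ℕ → Val))
  init : inst 0 = I
  step : ∀ i, (fired i).elim (inst (i + 1) = inst i)
    (fun p => p.1 ∈ D ∧ IsTrigger p.1 p.2 (inst i) ∧
      ∃ g', FreshExt (inst i) p.1 p.2 g' ∧ inst (i + 1) = inst i ∪ instT g' p.1.head)
  once : ∀ i j ξ g g', fired i = some (ξ, g) → fired j = some (ξ, g') →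
    EqOnFrontier ξ g g' → i = j

def SoblSeq.Fires {Rel : Type} {D : Set (TGD Rel)} {I : Inst Rel}
    (s : SoblSeq D I) (ξ : TGD Rel) (g : ℕ → Val) : Prop :=
  ∃ j g₀, s.fired j = some (ξ, g₀) ∧ EqOnFrontier ξ g₀ g

def SoblSeq.Terminates {Rel : Type} {D : Set (TGD Rel)} {I : Inst Rel}
    (s : SoblSeq D I) : Prop :=
  ∃ i, ∀ j, i ≤ j → s.fired j = none

def SoblSeq.Fair {Rel : Type} {D : Set (TGD Rel)} {I : Inst Rel}
    (s : SoblSeq D I) : Prop :=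
  ∀ i, ∀ ξ ∈ D, ∀ g, IsTrigger ξ g (s.inst i) → s.Fires ξ g

/-- The precedence relation ξ₁ ≺ ξ₂ of Deutsch et al. -/
def Prec {Rel : Type} (ξ₁ ξ₂ : TGD Rel) : Prop :=
  ∃ I : Inst Rel, I.Finite ∧ ∃ h₁ h₂ : ℕ → Val,
    ¬ Active ξ₂ h₂ I ∧ IsTrigger ξ₁ h₁ I ∧
    ∃ h₁', FreshExt I ξ₁ h₁ h₁' ∧ Active ξ₂ h₂ (I ∪ instT h₁' ξ₁.head)

inductive GRel where
  | R | E

/-- The six E-atoms of K₃ on variables 1, 2, 3. -/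
def K3head : Set (TAtom GRel) :=
  {⟨GRel.E, [Sum.inl 1, Sum.inl 2]⟩, ⟨GRel.E, [Sum.inl 2, Sum.inl 1]⟩,
   ⟨GRel.E, [Sum.inl 1, Sum.inl 3]⟩, ⟨GRel.E, [Sum.inl 3, Sum.inl 1]⟩,
   ⟨GRel.E, [Sum.inl 2, Sum.inl 3]⟩, ⟨GRel.E, [Sum.inl 3, Sum.inl 2]⟩}

/-- The head of ξ₂: one E-atom per edge of `G`, on existential variables
x₁,…,xₙ (vertex `i` is encoded as variable `i + 2`). -/
def Ghead {n : ℕ} (G : SimpleGraph (Fin n)) : Set (TAtom GRel) :=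
  {a | ∃ i j : Fin n, G.Adj i j ∧
        a = ⟨GRel.E, [Sum.inl ((i : ℕ) + 2), Sum.inl ((j : ℕ) + 2)]⟩}

lemma mem_K3head (a b : ℕ) (ha : a ∈ ({1,2,3} : Set ℕ)) (hb : b ∈ ({1,2,3} : Set ℕ))
    (hab : a ≠ b) : (⟨GRel.E, [Sum.inl a, Sum.inl b]⟩ : TAtom GRel) ∈ K3head := by
  simp only [Set.mem_insert_iff, Set.mem_singleton_iff] at ha hb
  rcases ha with rfl|rfl|rfl <;> rcases hb with rfl|rfl|rfl <;> simp_all [K3head]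

/-- With ξ₁ = R(z) → ∃z₁z₂z₃ K₃(z₁,z₂,z₃) and
ξ₂ = E(x,y) → ∃x₁…xₙ G(x₁,…,xₙ): ξ₁ ≺ ξ₂ iff `G` is not 3-colorable. -/
theorem stmt14 {n : ℕ} (G : SimpleGraph (Fin n)) :
    let ξ₁ : TGD GRel := ⟨{⟨GRel.R, [Sum.inl 0]⟩}, K3head⟩
    let ξ₂ : TGD GRel := ⟨{⟨GRel.E, [Sum.inl 0, Sum.inl 1]⟩}, Ghead G⟩
    Prec ξ₁ ξ₂ ↔ ¬ G.Colorable 3 := by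
  intro ξ₁ ξ₂
  constructor
  · rintro ⟨I, hIfin, h₁, h₂, hnA, htrig, h₁', hfresh, hAct⟩ hcol
    obtain ⟨C⟩ := hcol
    apply hAct.2
    refine ⟨fun v => if v < 2 then h₂ v else
      if h : v - 2 < n then h₁' (((C ⟨v-2, h⟩) : ℕ) + 1) else h₂ v, ?_, ?_⟩
    · intro v hv
      have hv01 : v = 0 ∨ v = 1 := by
        simp [varsOf, TAtom.vars, ξ₂] at hv
        omega
      rcases hv01 with rfl|rfl <;> simp
    · rintro a ⟨t, ht, rfl⟩
      obtain ⟨i, j, hadj, rfl⟩ := ht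
      right
      refine ⟨⟨GRel.E, [Sum.inl (((C i) : ℕ) + 1), Sum.inl (((C j) : ℕ) + 1)]⟩, ?_, ?_⟩
      · have hne : C i ≠ C j := C.valid hadj
        apply mem_K3head
        · have := (C i).isLt; simp only [Set.mem_insert_iff, Set.mem_singleton_iff]; omega
        · have := (C j).isLt; simp only [Set.mem_insert_iff, Set.mem_singleton_iff]; omega
        · intro h
          exact hne (Fin.ext (by omega))
      · have hi : (i : ℕ) + 2 - 2 = (i : ℕ) := by omega
        have hj : (j : ℕ) + 2 - 2 = (j : ℕ) := by omega
        have key : ∀ k : Fin n, (if (k:ℕ)+2 < 2 then h₂ ((k:ℕ)+2) else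
            if h : (k:ℕ)+2-2 < n then h₁' (((C ⟨(k:ℕ)+2-2, h⟩) : ℕ)+1) else h₂ ((k:ℕ)+2))
            = h₁' (((C k) : ℕ)+1) := by
          intro k
          have hk : (k:ℕ) + 2 - 2 = (k:ℕ) := by omega
          simp only [if_neg (by omega : ¬((k:ℕ)+2 < 2)), hk, k.isLt, dif_pos, Fin.eta]
        simp only [applyA, applyT, List.map_cons, List.map_nil, key]
  · intro hncol
    refine ⟨{⟨GRel.R, [Val.c 0]⟩}, Set.finite_singleton _, fun _ => Val.c 0,
      fun v => Val.n (v+1), ?_, ?_,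
      fun v => if v = 0 then Val.c 0 else Val.n v, ?_, ?_⟩
    · rintro ⟨ht, -⟩
      have : applyA (fun v => Val.n (v+1)) ⟨GRel.E, [Sum.inl 0, Sum.inl 1]⟩ ∈
          ({⟨GRel.R, [Val.c 0]⟩} : Inst GRel) := ht ⟨_, rfl, rfl⟩
      simp [applyA] at this
    · rintro a ⟨t, ht, rfl⟩
      simp only [ξ₁, Set.mem_singleton_iff] at ht
      subst ht
      simp [applyA, applyT]
    · refine ⟨?_, ?_, ?_⟩
      · intro v hv
        have : v = 0 := by
          simp [varsOf, TAtom.vars, ξ₁] at hv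
          omega
        simp [this]
      · intro v hv
        have hv0 : v ≠ 0 := fun h => hv.2 (by
          subst h
          simp [varsOf, TAtom.vars, ξ₁])
        constructor
        · exact ⟨v, by simp [hv0]⟩
        · simp only [hv0, if_false]
          rintro ⟨a, ha, hmem⟩
          simp only [Set.mem_singleton_iff] at ha
          subst ha
          simp at hmem
      · intro v hv w hw h
        have hv0 : v ≠ 0 := fun h' => hv.2 (by subst h'; simp [varsOf, TAtom.vars, ξ₁])
        have hw0 : w ≠ 0 := fun h' => hw.2 (by subst h'; simp [varsOf, TAtom.vars, ξ₁])
        simp only [hv0, hw0, if_false, Val.n.injEq] at h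
        exact h
    · constructor
      · rintro a ⟨t, ht, rfl⟩
        simp only [ξ₂, Set.mem_singleton_iff] at ht
        subst ht
        right
        refine ⟨⟨GRel.E, [Sum.inl 1, Sum.inl 2]⟩, ?_, ?_⟩
        · simp [ξ₁, K3head]
        · simp [applyA, applyT]
      · rintro ⟨g', hgeq, hsub⟩
        apply hncol
        classical
        refine ⟨SimpleGraph.Coloring.mk
          (fun i => if g' ((i : ℕ) + 2) = Val.n 1 then 0 else
            if g' ((i : ℕ) + 2) = Val.n 2 then 1 else 2) ?_⟩
        intro i j hadj h
        have hmem : applyA g' ⟨GRel.E, [Sum.inl ((i : ℕ) + 2), Sum.inl ((j : ℕ) + 2)]⟩ ∈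
            ({⟨GRel.R, [Val.c 0]⟩} : Inst GRel) ∪
              instT (fun v => if v = 0 then Val.c 0 else Val.n v) ξ₁.head :=
          hsub ⟨_, ⟨i, j, hadj, rfl⟩, rfl⟩
        rcases hmem with hmem | ⟨t, ht, heq⟩
        · simp [applyA] at hmem
        · have : ∃ a b : ℕ, a ∈ ({1,2,3} : Set ℕ) ∧ b ∈ ({1,2,3} : Set ℕ) ∧ a ≠ b ∧
              t = ⟨GRel.E, [Sum.inl a, Sum.inl b]⟩ := by
            simp only [ξ₁, K3head, Set.mem_insert_iff, Set.mem_singleton_iff] at ht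
            rcases ht with rfl|rfl|rfl|rfl|rfl|rfl <;>
              exact ⟨_, _, by simp, by simp, by omega, rfl⟩
          obtain ⟨a, b, ha, hb, hab, rfl⟩ := this
          simp only [Set.mem_insert_iff, Set.mem_singleton_iff] at ha hb
          have ha0 : a ≠ 0 := by omega
          have hb0 : b ≠ 0 := by omega
          simp only [applyA, applyT, List.map_cons, List.map_nil,
            ha0, hb0, if_false] at heq
          injection heq with _ hargs
          injection hargs with hgi hargs
          injection hargs with hgj _
          have h' : (if (Val.n a) = Val.n 1 then (0 : Fin 3) else
              if Val.n a = Val.n 2 then 1 else 2) =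
              (if Val.n b = Val.n 1 then 0 else if Val.n b = Val.n 2 then 1 else 2) := by
            rw [hgi, hgj]; exact h
          clear h hgi hgj hsub hgeq ht
          rcases ha with rfl|rfl|rfl <;> rcases hb with rfl|rfl|rfl <;>
            first
            | exact hab rfl
            | simp [Val.n.injEq] at h'
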